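/- arXiv:2306.13605 — 5 statements merged into one kernel-verified Lean document; each statement's English description precedes it below -/
import Mathlib

section
/- Let R be a ring (associative, unital, possibly noncommutative) in which p^k·1_R = 0, where p is a prime number and k ≥ 1 is an integer. Let S be a subring of R, and let a, b ∈ S be elements such that a·b − 1 ∈ p·R and b·a − 1 ∈ p·R. Then a is a unit of R whose two-sided inverse lies in S: explicitly, the element c = b·(a·b)^{p^{k-1}−1} belongs to S and satisfies a·c = 1 and c·a = 1. -/
/-!
Write `a * b = 1 + p • r` and `n = k - 1`. Since `p ∣ (1 + p X) - 1` in `ℤ[X]`, the binomial theorem gives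
`p ^ (n + 1) ∣ (1 + p X) ^ p ^ n - 1`; evaluating at `r` in a ring where `p ^ (n + 1) = 0` shows
`(a * b) ^ p ^ n = 1`, and likewise `(b * a) ^ p ^ n = 1`. Hence `b * (a * b) ^ (p ^ n - 1)`, a
polynomial in `a` and `b`, is a two-sided inverse of `a`.
-/

open Polynomial

theorem pow_pow_eq_one_of_sub_one_eq_nsmul {R : Type*} [Ring R] {p n : ℕ}
    (hp : (p : R) ^ (n + 1) = 0) {x : R} (hx : ∃ r : R, x - 1 = p • r) : x ^ p ^ n = 1 := by
  obtain ⟨r, hr⟩ := hx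
  have hX : (p : ℤ[X]) ∣ (1 + (p : ℤ[X]) * X) - 1 := ⟨X, by ring⟩
  obtain ⟨q, hq⟩ := dvd_sub_pow_of_dvd_sub hX n
  have hx_eval : x = aeval r (1 + (p : ℤ[X]) * X) := by
    rw [sub_eq_iff_eq_add'.mp hr]
    simp [nsmul_eq_mul]
  have hq_eval := congrArg (aeval r) hq
  rw [map_sub, map_pow, ← hx_eval, map_mul, one_pow, map_one, map_pow, map_natCast, hp,
    zero_mul] at hq_eval
  exact sub_eq_zero.mp hq_eval

theorem mul_mul_pow_pred_eq_one {M : Type*} [Monoid M] {a b : M} {m : ℕ} (hm : m ≠ 0)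
    (hab : (a * b) ^ m = 1) : a * (b * (a * b) ^ (m - 1)) = 1 := by
  rw [← mul_assoc, ← pow_succ', Nat.sub_add_cancel (Nat.one_le_iff_ne_zero.mpr hm), hab]

theorem mul_pow_pred_mul_eq_one {M : Type*} [Monoid M] {a b : M} {m : ℕ} (hm : m ≠ 0)
    (hba : (b * a) ^ m = 1) : b * (a * b) ^ (m - 1) * a = 1 := by
  rw [mul_assoc, mul_pow_mul, ← mul_assoc, ← pow_succ',
    Nat.sub_add_cancel (Nat.one_le_iff_ne_zero.mpr hm), hba]

theorem rational_inverse_mod_pPow_general (R : Type) [Ring R] (p k : ℕ) (hp : p.Prime)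
    (hR : p ^ k • (1 : R) = 0)
    (S : Subring R) (a b : R) (ha : a ∈ S) (hb : b ∈ S)
    (hab : ∃ r : R, a * b - 1 = p • r) (hba : ∃ r : R, b * a - 1 = p • r) :
    b * (a * b) ^ (p ^ (k - 1) - 1) ∈ S ∧
      a * (b * (a * b) ^ (p ^ (k - 1) - 1)) = 1 ∧
      (b * (a * b) ^ (p ^ (k - 1) - 1)) * a = 1 := by
  have hpR : (p : R) ^ (k - 1 + 1) = 0 :=
    pow_eq_zero_of_le (m := k) (by omega) (by rwa [nsmul_one, Nat.cast_pow] at hR)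
  have hm : p ^ (k - 1) ≠ 0 := pow_ne_zero _ hp.ne_zero
  exact ⟨S.mul_mem hb (S.pow_mem (S.mul_mem ha hb) _),
    mul_mul_pow_pred_eq_one hm (pow_pow_eq_one_of_sub_one_eq_nsmul hpR hab),
    mul_pow_pred_mul_eq_one hm (pow_pow_eq_one_of_sub_one_eq_nsmul hpR hba)⟩

/-- Let `R` be a (possibly noncommutative) unital ring with `pᵏ·1 = 0`, `S ⊆ R` a subring,
and `a, b ∈ S` with `a·b − 1 ∈ p·R` and `b·a − 1 ∈ p·R`. Then `c = b·(a·b)^(p^(k-1) − 1)`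
lies in `S` and is a two-sided inverse of `a`. -/
theorem rational_inverse_mod_pPow (R : Type) [Ring R] (p k : ℕ) (hp : p.Prime)
    (hk : 1 ≤ k) (hR : p ^ k • (1 : R) = 0)
    (S : Subring R) (a b : R) (ha : a ∈ S) (hb : b ∈ S)
    (hab : ∃ r : R, a * b - 1 = p • r) (hba : ∃ r : R, b * a - 1 = p • r) :
    b * (a * b) ^ (p ^ (k - 1) - 1) ∈ S ∧
      a * (b * (a * b) ^ (p ^ (k - 1) - 1)) = 1 ∧
      (b * (a * b) ^ (p ^ (k - 1) - 1)) * a = 1 :=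
  rational_inverse_mod_pPow_general R p k hp hR S a b ha hb hab hba
end

section
/- Under hypothesis (H), the R-module M ⊗_R N is generated by J together with the image of the map N → M ⊗_R N, n ↦ 1 ⊗ n; that is, M ⊗_R N = J + (1 ⊗ N) as R-submodules. -/
open scoped TensorProduct

open Algebra.TensorProduct

/-!
By (H), modulo `J` every `a ⊗ 1` is a scalar minus a sum `∑ uᵢ ⊗ vᵢ` with `vᵢ ∈ F¹`.
Multiplying by `1 ⊗ n` writes `a ⊗ n` as an element of `J + 1 ⊗ N` plus terms `uᵢ ⊗ n vᵢ`
with `n vᵢ` one filtration step deeper than `n`; since `F^{d+1} = 0`, downward induction on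
the filtration degree of `n` shows that every `a ⊗ n` lies in `J + 1 ⊗ N`.
-/

section

variable {R M N : Type*} [CommRing R] [Ring M] [Ring N] [Algebra R M] [Algebra R N]

theorem tmul_eq_one_tmul_mul_sub_sum_add_smul {ι : Type*} [Fintype ι] (a : M) (n : N)
    (u : ι → M) (v : ι → N) (c : R) :
    a ⊗ₜ[R] n = (1 ⊗ₜ n) * (a ⊗ₜ 1 + ∑ i, u i ⊗ₜ v i - algebraMap R (M ⊗[R] N) c)
      - ∑ i, u i ⊗ₜ (n * v i) + c • (1 ⊗ₜ n) := by
  rw [mul_sub, mul_add, Finset.mul_sum, ← Algebra.commutes, ← Algebra.smul_def]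
  simp only [tmul_mul_tmul, one_mul, mul_one]
  abel

theorem tmul_mem_sup_range_includeRight (I : Ideal (M ⊗[R] N)) (F : ℕ → Submodule R N)
    (hFmul : ∀ s : ℕ, ∀ x ∈ F s, ∀ y ∈ F 1, x * y ∈ F (s + 1))
    (d : ℕ) (hFd : F (d + 1) = ⊥)
    (hsplit : ∀ a : M, ∃ (k : ℕ) (u : Fin k → M) (v : Fin k → N) (c : R), (∀ i, v i ∈ F 1) ∧
      a ⊗ₜ[R] 1 + ∑ i, u i ⊗ₜ v i - algebraMap R (M ⊗[R] N) c ∈ I)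
    {s : ℕ} (hs : s ≤ d + 1) (a : M) {n : N} (hn : n ∈ F s) :
    a ⊗ₜ[R] n ∈
      I.restrictScalars R ⊔ LinearMap.range (includeRight : N →ₐ[R] M ⊗[R] N).toLinearMap := by
  induction hs using Nat.decreasingInduction generalizing a n with
  | self =>
    rw [hFd, Submodule.mem_bot] at hn
    simp [hn]
  | of_succ s _ ih =>
    obtain ⟨k, u, v, c, hv, hI⟩ := hsplit a
    rw [tmul_eq_one_tmul_mul_sub_sum_add_smul a n u v c]
    refine add_mem (sub_mem ?_ (sum_mem fun i _ => ih (u i) (hFmul s n hn (v i) (hv i)))) ?_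
    · exact Submodule.mem_sup_left (I.mul_mem_left _ hI)
    · exact Submodule.smul_mem _ c (Submodule.mem_sup_right ⟨n, rfl⟩)

end

theorem tensor_eq_ideal_sup_includeRight_general
    (R : Type) [CommRing R] (M N : Type) [CommRing M] [CommRing N]
    [Algebra R M] [Algebra R N]
    (εM : M →ₐ[R] R) (εN : N →ₐ[R] R)
    (S : Subalgebra R (M ⊗[R] N))
    (F : ℕ → Submodule R N)
    (hF0 : F 0 = ⊤)
    (hF1 : ∀ y : N, y ∈ F 1 ↔ εN y = 0)
    (hFmul : ∀ s : ℕ, ∀ x ∈ F s, ∀ y ∈ F 1, x * y ∈ F (s + 1))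
    (d : ℕ) (hFd : F (d + 1) = ⊥)
    (hH : ∀ a : M, ∃ (k : ℕ) (u : Fin k → M) (v : Fin k → N),
      (∀ i, v i ∈ F 1) ∧
        (a ⊗ₜ[R] (1 : N) + ∑ i, u i ⊗ₜ[R] v i) ∈ S) :
    Submodule.restrictScalars R
        (Ideal.span {x : M ⊗[R] N |
          x ∈ S ∧ Algebra.TensorProduct.productMap εM εN x = 0}) ⊔
      LinearMap.range
        ((Algebra.TensorProduct.includeRight : N →ₐ[R] M ⊗[R] N).toLinearMap) = ⊤ := by
  have hsplit (a : M) : ∃ (k : ℕ) (u : Fin k → M) (v : Fin k → N) (c : R), (∀ i, v i ∈ F 1) ∧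
      a ⊗ₜ[R] 1 + ∑ i, u i ⊗ₜ v i - algebraMap R (M ⊗[R] N) c ∈
        Ideal.span {x | x ∈ S ∧ productMap εM εN x = 0} := by
    obtain ⟨k, u, v, hv, hS⟩ := hH a
    refine ⟨k, u, v, εM a, hv, Ideal.subset_span ⟨sub_mem hS (S.algebraMap_mem _), ?_⟩⟩
    simp [(hF1 _).mp (hv _)]
  rw [eq_top_iff, ← TensorProduct.span_tmul_eq_top, Submodule.span_le]
  rintro _ ⟨a, n, rfl⟩
  exact tmul_mem_sup_range_includeRight _ F hFmul d hFd hsplit (Nat.zero_le _) a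
    (hF0 ▸ Submodule.mem_top)

/-- Under hypothesis (H), the `R`-module `M ⊗[R] N` is generated by the ideal `J`
(generated by `S⁺ = S ∩ ker ε`) together with the image of `n ↦ 1 ⊗ n`. -/
theorem tensor_eq_ideal_sup_includeRight
    (R : Type) [CommRing R] (M N : Type) [CommRing M] [CommRing N]
    [Algebra R M] [Algebra R N]
    (εM : M →ₐ[R] R) (εN : N →ₐ[R] R)
    (S : Subalgebra R (M ⊗[R] N))
    (F : ℕ → Submodule R N)
    (hF0 : F 0 = ⊤)
    (hFdesc : ∀ s : ℕ, F (s + 1) ≤ F s)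
    (hF1 : ∀ y : N, y ∈ F 1 ↔ εN y = 0)
    (hFmul : ∀ s : ℕ, ∀ x ∈ F s, ∀ y ∈ F 1, x * y ∈ F (s + 1))
    (d : ℕ) (hFd : F (d + 1) = ⊥)
    (hH : ∀ a : M, ∃ (k : ℕ) (u : Fin k → M) (v : Fin k → N),
      (∀ i, v i ∈ F 1) ∧
        (a ⊗ₜ[R] (1 : N) + ∑ i, u i ⊗ₜ[R] v i) ∈ S) :
    Submodule.restrictScalars R
        (Ideal.span {x : M ⊗[R] N |
          x ∈ S ∧ Algebra.TensorProduct.productMap εM εN x = 0}) ⊔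
      LinearMap.range
        ((Algebra.TensorProduct.includeRight : N →ₐ[R] M ⊗[R] N).toLinearMap) = ⊤ :=
  tensor_eq_ideal_sup_includeRight_general R M N εM εN S F hF0 hF1 hFmul d hFd hH
end

section
/- Under hypothesis (H), if y ∈ N satisfies 1 ⊗ y ∈ J, then 1 ⊗ y lies in the R-submodule of M ⊗_R N spanned by the products (1 ⊗ c)·s with c ∈ N and s ∈ S⁺. -/
/-!
By (H), `m ⊗ v = (1 ⊗ v)·(m ⊗ 1 + Σ uᵢ ⊗ vᵢ) - Σ uᵢ ⊗ v vᵢ` with `v vᵢ` one step deeper in the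
filtration; since the filtration vanishes at step `d + 1`, descending induction shows that the
products `(1 ⊗ c)·s` with `s ∈ S` span `M ⊗ N` over `R`. Hence every `a·t` with `t ∈ S⁺` is an
`R`-combination of `(1 ⊗ c)·(s t)`, and `s t ∈ S⁺`.
-/

open scoped TensorProduct

open Submodule

section SpanMul

variable {R A ι : Type*} [CommSemiring R] [CommSemiring A] [Algebra R A]

theorem mul_mem_span_mul_of_span_mul_eq_top (f : ι → A) (S : Subalgebra R A) {P : Set A}
    (hspan : span R {x | ∃ i, ∃ s ∈ S, x = f i * s} = ⊤)
    (hP : ∀ s ∈ S, ∀ p ∈ P, s * p ∈ P) (a : A) {p : A} (hp : p ∈ P) :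
    a * p ∈ span R {x | ∃ i, ∃ q ∈ P, x = f i * q} := by
  have ha : a ∈ span R {x | ∃ i, ∃ s ∈ S, x = f i * s} := hspan ▸ mem_top
  induction ha using span_induction with
  | mem x hx =>
    obtain ⟨i, s, hs, rfl⟩ := hx
    rw [mul_assoc]
    exact subset_span ⟨i, s * p, hP s hs p hp, rfl⟩
  | zero => simp
  | add x z _ _ hx hz => rw [add_mul]; exact add_mem hx hz
  | smul r x _ hx => rw [smul_mul_assoc]; exact smul_mem _ r hx

theorem restrictScalars_ideal_span_le_span_mul (f : ι → A) (S : Subalgebra R A) {P : Set A}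
    (hspan : span R {x | ∃ i, ∃ s ∈ S, x = f i * s} = ⊤)
    (hP : ∀ s ∈ S, ∀ p ∈ P, s * p ∈ P) :
    (Ideal.span P).restrictScalars R ≤ span R {x | ∃ i, ∃ q ∈ P, x = f i * q} := by
  intro x hx
  suffices ∀ a, a * x ∈ span R {x | ∃ i, ∃ q ∈ P, x = f i * q} by simpa using this 1
  induction hx using span_induction with
  | mem p hp => exact fun a => mul_mem_span_mul_of_span_mul_eq_top f S hspan hP a hp
  | zero => simp
  | add x z _ _ hx hz => intro a; rw [mul_add]; exact add_mem (hx a) (hz a)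
  | smul b x _ hx => intro a; rw [smul_eq_mul, ← mul_assoc]; exact hx (a * b)

end SpanMul

section Filtration

variable {R M N : Type*} [CommRing R] [CommRing M] [CommRing N] [Algebra R M] [Algebra R N]
  (S : Subalgebra R (M ⊗[R] N))

theorem tmul_mem_span_of_tmul_mul_mem {I : Submodule R N}
    (hH : ∀ a : M, ∃ (k : ℕ) (u : Fin k → M) (v : Fin k → N),
      (∀ i, v i ∈ I) ∧ (a ⊗ₜ[R] (1 : N) + ∑ i, u i ⊗ₜ[R] v i) ∈ S)
    {w : N} (hw : ∀ m : M, ∀ v ∈ I,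
      m ⊗ₜ[R] (w * v) ∈ span R {x | ∃ c, ∃ s ∈ S, x = ((1 : M) ⊗ₜ[R] c) * s})
    (m : M) : m ⊗ₜ[R] w ∈ span R {x | ∃ c, ∃ s ∈ S, x = ((1 : M) ⊗ₜ[R] c) * s} := by
  obtain ⟨k, u, v, hv, hs⟩ := hH m
  have hsplit : m ⊗ₜ[R] w = ((1 : M) ⊗ₜ[R] w) * (m ⊗ₜ[R] (1 : N) + ∑ i, u i ⊗ₜ[R] v i)
      - ∑ i, u i ⊗ₜ[R] (w * v i) := by
    simp [mul_add, Finset.mul_sum, Algebra.TensorProduct.tmul_mul_tmul]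
  rw [hsplit]
  exact sub_mem (subset_span ⟨w, _, hs, rfl⟩) (sum_mem fun i _ => hw (u i) (v i) (hv i))

variable {F : ℕ → Submodule R N}
  (hFmul : ∀ s : ℕ, ∀ x ∈ F s, ∀ y ∈ F 1, x * y ∈ F (s + 1))
  (hH : ∀ a : M, ∃ (k : ℕ) (u : Fin k → M) (v : Fin k → N),
    (∀ i, v i ∈ F 1) ∧ (a ⊗ₜ[R] (1 : N) + ∑ i, u i ⊗ₜ[R] v i) ∈ S)
include hFmul hH

theorem tmul_mem_span_of_mem_filtration {d : ℕ} (hFd : F (d + 1) = ⊥) (j k : ℕ)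
    (hjk : k + j = d + 1) (m : M) {w : N} (hw : w ∈ F k) :
    m ⊗ₜ[R] w ∈ span R {x | ∃ c, ∃ s ∈ S, x = ((1 : M) ⊗ₜ[R] c) * s} := by
  induction j generalizing k m w with
  | zero =>
    rw [add_zero] at hjk
    rw [hjk, hFd, mem_bot] at hw
    simp [hw]
  | succ j ih =>
    exact tmul_mem_span_of_tmul_mul_mem S hH
      (fun m' v hv => ih (k + 1) (by omega) m' (hFmul k w hw v hv)) m

theorem span_one_tmul_mul_eq_top (hF0 : F 0 = ⊤) {d : ℕ} (hFd : F (d + 1) = ⊥) :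
    span R {x | ∃ c, ∃ s ∈ S, x = ((1 : M) ⊗ₜ[R] c) * s} = ⊤ := by
  refine eq_top_iff'.2 fun x => ?_
  induction x using TensorProduct.induction_on with
  | zero => exact zero_mem _
  | tmul m w =>
    exact tmul_mem_span_of_mem_filtration S hFmul hH hFd (d + 1) 0 (zero_add _) m
      (hF0 ▸ mem_top)
  | add x z hx hz => exact add_mem hx hz

end Filtration

theorem one_tmul_mem_span_smul_of_mem_ideal_general
    (R : Type) [CommRing R] (M N : Type) [CommRing M] [CommRing N]
    [Algebra R M] [Algebra R N]
    (εM : M →ₐ[R] R) (εN : N →ₐ[R] R)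
    (S : Subalgebra R (M ⊗[R] N))
    (F : ℕ → Submodule R N)
    (hF0 : F 0 = ⊤)
    (hFmul : ∀ s : ℕ, ∀ x ∈ F s, ∀ y ∈ F 1, x * y ∈ F (s + 1))
    (d : ℕ) (hFd : F (d + 1) = ⊥)
    (hH : ∀ a : M, ∃ (k : ℕ) (u : Fin k → M) (v : Fin k → N),
      (∀ i, v i ∈ F 1) ∧
        (a ⊗ₜ[R] (1 : N) + ∑ i, u i ⊗ₜ[R] v i) ∈ S)
    (y : N)
    (hy : (1 : M) ⊗ₜ[R] y ∈
      Ideal.span {x : M ⊗[R] N |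
        x ∈ S ∧ Algebra.TensorProduct.productMap εM εN x = 0}) :
    (1 : M) ⊗ₜ[R] y ∈
      Submodule.span R {x : M ⊗[R] N | ∃ (c : N) (s : M ⊗[R] N),
        s ∈ S ∧ Algebra.TensorProduct.productMap εM εN s = 0 ∧
          x = ((1 : M) ⊗ₜ[R] c) * s} := by
  have hS_mul : ∀ s ∈ S, ∀ t ∈ {x | x ∈ S ∧ Algebra.TensorProduct.productMap εM εN x = 0},
      s * t ∈ {x | x ∈ S ∧ Algebra.TensorProduct.productMap εM εN x = 0} :=
    fun s hs t ⟨ht, hεt⟩ => ⟨S.mul_mem hs ht, by rw [map_mul, hεt, mul_zero]⟩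
  have h := restrictScalars_ideal_span_le_span_mul (fun c : N => (1 : M) ⊗ₜ[R] c) S
    (span_one_tmul_mul_eq_top S hFmul hH hF0 hFd) hS_mul hy
  simpa only [Set.mem_ofPred_eq, and_assoc] using h

/-- Under hypothesis (H), if `1 ⊗ y` lies in the ideal `J` generated by
`S⁺ = S ∩ ker ε`, then `1 ⊗ y` lies in the `R`-submodule spanned by the products
`(1 ⊗ c)·s` with `c ∈ N` and `s ∈ S⁺`. -/
theorem one_tmul_mem_span_smul_of_mem_ideal
    (R : Type) [CommRing R] (M N : Type) [CommRing M] [CommRing N]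
    [Algebra R M] [Algebra R N]
    (εM : M →ₐ[R] R) (εN : N →ₐ[R] R)
    (S : Subalgebra R (M ⊗[R] N))
    (F : ℕ → Submodule R N)
    (hF0 : F 0 = ⊤)
    (hFdesc : ∀ s : ℕ, F (s + 1) ≤ F s)
    (hF1 : ∀ y : N, y ∈ F 1 ↔ εN y = 0)
    (hFmul : ∀ s : ℕ, ∀ x ∈ F s, ∀ y ∈ F 1, x * y ∈ F (s + 1))
    (d : ℕ) (hFd : F (d + 1) = ⊥)
    (hH : ∀ a : M, ∃ (k : ℕ) (u : Fin k → M) (v : Fin k → N),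
      (∀ i, v i ∈ F 1) ∧
        (a ⊗ₜ[R] (1 : N) + ∑ i, u i ⊗ₜ[R] v i) ∈ S)
    (y : N)
    (hy : (1 : M) ⊗ₜ[R] y ∈
      Ideal.span {x : M ⊗[R] N |
        x ∈ S ∧ Algebra.TensorProduct.productMap εM εN x = 0}) :
    (1 : M) ⊗ₜ[R] y ∈
      Submodule.span R {x : M ⊗[R] N | ∃ (c : N) (s : M ⊗[R] N),
        s ∈ S ∧ Algebra.TensorProduct.productMap εM εN s = 0 ∧
          x = ((1 : M) ⊗ₜ[R] c) * s} :=
  one_tmul_mem_span_smul_of_mem_ideal_general R M N εM εN S F hF0 hFmul d hFd hH y hy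
end

section
/- Under hypothesis (H) and the additional data (χ, π, T), if y ∈ N satisfies 1 ⊗ y ∈ J, then y belongs to J_N, the ideal of N generated by T ∩ ker ε_N. -/
open scoped TensorProduct

/-!
Write `φ = χ ⊗ id : M ⊗ N → N`, which is `N`-linear, and `μ = id ⊗ ε_N : M ⊗ N → M`, so that
`ε = ε_M ∘ μ`. For `s ∈ S` with `μ s = 0`, `φ ((m ⊗ w) s) ∈ J_N` by descending induction on the
filtration degree of `w`: by (H), `m ⊗ w = σ_m (1 ⊗ w) - ∑ uᵢ ⊗ w vᵢ` with `σ_m ∈ S`, where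
`φ (σ_m s) ∈ T ∩ ker ε_N` and each `w vᵢ` lies one step deeper in the filtration, which vanishes in
degree `d + 1`. Now lift `π` to `σ ∈ S` with `μ σ = π`. Every `g ∈ S⁺` gives `g σ ∈ S` with
`μ (g σ) = μ g · π = 0`, as `π` annihilates `ker ε_M`; hence `φ (σ (1 ⊗ y)) = φ σ · y ∈ J_N`.
Finally `φ σ - 1 ∈ T ∩ ker ε_N`, because `ε_N (φ σ) = χ π = 1`.
-/

namespace AugmentedTensorProduct

variable {R M N : Type*} [CommRing R] [CommRing M] [CommRing N] [Algebra R M] [Algebra R N]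

/-- `χ ⊗ id : M ⊗ N → R ⊗ N ≃ N`. -/
def contractLeft (χ : M →ₗ[R] R) : M ⊗[R] N →ₗ[R] N :=
  (TensorProduct.lid R N).toLinearMap.comp (TensorProduct.map χ LinearMap.id)

/-- `id ⊗ ε : M ⊗ N → M ⊗ R ≃ M`. -/
def contractRight (ε : N →ₐ[R] R) : M ⊗[R] N →ₐ[R] M :=
  Algebra.TensorProduct.productMap (AlgHom.id R M) ((Algebra.ofId R M).comp ε)

@[simp]
theorem contractLeft_tmul (χ : M →ₗ[R] R) (m : M) (n : N) :
    contractLeft χ (m ⊗ₜ[R] n) = χ m • n := by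
  simp [contractLeft]

@[simp]
theorem contractRight_tmul (ε : N →ₐ[R] R) (m : M) (n : N) :
    contractRight ε (m ⊗ₜ[R] n) = ε n • m := by
  simp [contractRight, Algebra.ofId_apply, Algebra.smul_def, mul_comm]

theorem contractLeft_mul_one_tmul (χ : M →ₗ[R] R) (x : M ⊗[R] N) (n : N) :
    contractLeft χ (x * (1 : M) ⊗ₜ[R] n) = contractLeft χ x * n := by
  induction x using TensorProduct.induction_on with
  | zero => simp
  | tmul a b => simp [Algebra.TensorProduct.tmul_mul_tmul]
  | add x y hx hy => simp [add_mul, hx, hy]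

theorem apply_contractLeft (χ : M →ₗ[R] R) (ε : N →ₐ[R] R) (x : M ⊗[R] N) :
    ε (contractLeft χ x) = χ (contractRight ε x) := by
  induction x using TensorProduct.induction_on with
  | zero => simp
  | tmul a b => simp [mul_comm]
  | add x y hx hy => simp [hx, hy]

theorem productMap_apply_eq_apply_contractRight (εM : M →ₐ[R] R) (εN : N →ₐ[R] R)
    (x : M ⊗[R] N) :
    Algebra.TensorProduct.productMap εM εN x = εM (contractRight εN x) := by
  induction x using TensorProduct.induction_on with
  | zero => simp
  | tmul a b => simp [mul_comm]
  | add x y hx hy => simp [hx, hy]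

def LiftsTmulOneModulo (S : Subalgebra R (M ⊗[R] N)) (P : Submodule R N) : Prop :=
  ∀ a : M, ∃ (k : ℕ) (u : Fin k → M) (v : Fin k → N),
    (∀ i, v i ∈ P) ∧ (a ⊗ₜ[R] (1 : N) + ∑ i, u i ⊗ₜ[R] v i) ∈ S

/-- The largest ideal of `M ⊗ N` that `contractLeft χ` maps into `I`. -/
def contractLeftCore (χ : M →ₗ[R] R) (I : Ideal N) : Ideal (M ⊗[R] N) where
  carrier := {x | ∀ z, contractLeft χ (z * x) ∈ I}
  zero_mem' _ := by simp
  add_mem' hx hy z := by simpa [mul_add] using I.add_mem (hx z) (hy z)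
  smul_mem' c x hx z := by simpa [mul_assoc] using hx (z * c)

theorem mem_contractLeftCore {χ : M →ₗ[R] R} {I : Ideal N} {x : M ⊗[R] N} :
    x ∈ contractLeftCore χ I ↔ ∀ z, contractLeft χ (z * x) ∈ I :=
  Iff.rfl

section Filtration

variable {S : Subalgebra R (M ⊗[R] N)} {T : Subalgebra R N} {F : ℕ → Submodule R N}
  {χ : M →ₗ[R] R} {ε : N →ₐ[R] R}

theorem exists_mem_contractRight_eq
    {P : Submodule R N} (hP : ∀ y ∈ P, ε y = 0) (hH : LiftsTmulOneModulo S P) (a : M) :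
    ∃ σ ∈ S, contractRight ε σ = a := by
  obtain ⟨k, u, v, hv, hσ⟩ := hH a
  have hv0 : ∀ i, ε (v i) = 0 := fun i => hP _ (hv i)
  exact ⟨_, hσ, by simp [hv0]⟩

theorem contractLeft_tmul_mul_mem_of_succ
    (hFmul : ∀ s : ℕ, ∀ x ∈ F s, ∀ y ∈ F 1, x * y ∈ F (s + 1))
    (hH : LiftsTmulOneModulo S (F 1))
    (hT : ∀ x ∈ S, contractLeft χ x ∈ T)
    {s : M ⊗[R] N} (hs : s ∈ S) (hεs : contractRight ε s = 0) {j : ℕ}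
    (ih : ∀ (m : M), ∀ w ∈ F (j + 1),
      contractLeft χ (m ⊗ₜ[R] w * s) ∈ Ideal.span {z : N | z ∈ T ∧ ε z = 0})
    (m : M) {w : N} (hw : w ∈ F j) :
    contractLeft χ (m ⊗ₜ[R] w * s) ∈ Ideal.span {z : N | z ∈ T ∧ ε z = 0} := by
  obtain ⟨k, u, v, hv, hσS⟩ := hH m
  set σ := m ⊗ₜ[R] (1 : N) + ∑ i, u i ⊗ₜ[R] v i
  have hσs : contractLeft χ (σ * s) ∈ Ideal.span {z : N | z ∈ T ∧ ε z = 0} :=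
    Ideal.subset_span ⟨hT _ (mul_mem hσS hs), by simp [apply_contractLeft, hεs]⟩
  have hsplit : m ⊗ₜ[R] w * s = σ * s * (1 : M) ⊗ₜ[R] w - ∑ i, u i ⊗ₜ[R] (w * v i) * s := by
    have hσw : σ * (1 : M) ⊗ₜ[R] w = m ⊗ₜ[R] w + ∑ i, u i ⊗ₜ[R] (w * v i) := by
      simp only [σ, add_mul, Finset.sum_mul, Algebra.TensorProduct.tmul_mul_tmul, mul_one, one_mul,
        mul_comm w]
    rw [eq_sub_iff_add_eq, ← Finset.sum_mul, ← add_mul, ← hσw]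
    ring
  rw [hsplit, map_sub, contractLeft_mul_one_tmul, map_sum]
  exact Ideal.sub_mem _ (Ideal.mul_mem_right w _ hσs)
    (Ideal.sum_mem _ fun i _ => ih (u i) _ (hFmul j w hw (v i) (hv i)))

theorem mem_contractLeftCore_of_mem_of_contractRight_eq_zero
    (hF0 : F 0 = ⊤)
    (hFmul : ∀ s : ℕ, ∀ x ∈ F s, ∀ y ∈ F 1, x * y ∈ F (s + 1))
    {d : ℕ} (hFd : F (d + 1) = ⊥)
    (hH : LiftsTmulOneModulo S (F 1))
    (hT : ∀ x ∈ S, contractLeft χ x ∈ T)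
    {s : M ⊗[R] N} (hs : s ∈ S) (hεs : contractRight ε s = 0) :
    s ∈ contractLeftCore χ (Ideal.span {z : N | z ∈ T ∧ ε z = 0}) := by
  have hF : ∀ j ≤ d + 1, ∀ (m : M), ∀ w ∈ F j,
      contractLeft χ (m ⊗ₜ[R] w * s) ∈ Ideal.span {z : N | z ∈ T ∧ ε z = 0} := by
    intro j hj
    induction hj using Nat.decreasingInduction with
    | self =>
      intro m w hw
      rw [hFd, Submodule.mem_bot] at hw
      simp [hw]
    | of_succ j _ ih =>
      exact fun m w hw => contractLeft_tmul_mul_mem_of_succ hFmul hH hT hs hεs ih m hw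
  refine mem_contractLeftCore.2 fun z => ?_
  induction z using TensorProduct.induction_on with
  | zero => simp
  | tmul m n => exact hF 0 (Nat.zero_le _) m n (hF0 ▸ Submodule.mem_top)
  | add x y hx hy => simpa [add_mul] using Ideal.add_mem _ hx hy

end Filtration

end AugmentedTensorProduct

open AugmentedTensorProduct in
theorem mem_idealN_of_one_tmul_mem_ideal_general
    (R : Type) [CommRing R] (M N : Type) [CommRing M] [CommRing N]
    [Algebra R M] [Algebra R N]
    (εM : M →ₐ[R] R) (εN : N →ₐ[R] R)
    (S : Subalgebra R (M ⊗[R] N))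
    (F : ℕ → Submodule R N)
    (hF0 : F 0 = ⊤)
    (hF1 : ∀ y : N, y ∈ F 1 ↔ εN y = 0)
    (hFmul : ∀ s : ℕ, ∀ x ∈ F s, ∀ y ∈ F 1, x * y ∈ F (s + 1))
    (d : ℕ) (hFd : F (d + 1) = ⊥)
    (hH : ∀ a : M, ∃ (k : ℕ) (u : Fin k → M) (v : Fin k → N),
      (∀ i, v i ∈ F 1) ∧
        (a ⊗ₜ[R] (1 : N) + ∑ i, u i ⊗ₜ[R] v i) ∈ S)
    (χ : M →ₗ[R] R) (π : M)
    (hχπ : χ π = 1)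
    (hπ : ∀ m : M, εM m = 0 → π * m = 0)
    (T : Subalgebra R N)
    (hT : ∀ x : M ⊗[R] N, x ∈ S →
      (TensorProduct.lid R N).toLinearMap.comp
        (TensorProduct.map χ (LinearMap.id : N →ₗ[R] N)) x ∈ T)
    (y : N)
    (hy : (1 : M) ⊗ₜ[R] y ∈
      Ideal.span {x : M ⊗[R] N |
        x ∈ S ∧ Algebra.TensorProduct.productMap εM εN x = 0}) :
    y ∈ Ideal.span {z : N | z ∈ T ∧ εN z = 0} := by
  set I := Ideal.span {z : N | z ∈ T ∧ εN z = 0}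
  obtain ⟨σ, hσS, hσπ⟩ := exists_mem_contractRight_eq (fun y => (hF1 y).1) hH π
  have hJ : Ideal.span {x : M ⊗[R] N | x ∈ S ∧ Algebra.TensorProduct.productMap εM εN x = 0} ≤
      (contractLeftCore χ I).colon (Ideal.span {σ}) := by
    refine Ideal.span_le.2 fun g ⟨hgS, hgε⟩ => Ideal.mem_colon_span_singleton.2 ?_
    refine mem_contractLeftCore_of_mem_of_contractRight_eq_zero hF0 hFmul hFd hH hT
      (mul_mem hgS hσS) ?_
    rw [productMap_apply_eq_apply_contractRight] at hgε
    rw [map_mul, hσπ, mul_comm, hπ _ hgε]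
  have hyσ : contractLeft χ σ * y ∈ I := by
    simpa [mul_comm, contractLeft_mul_one_tmul] using
      mem_contractLeftCore.1 (Ideal.mem_colon_span_singleton.1 (hJ hy)) 1
  have hσ1 : contractLeft χ σ - 1 ∈ I :=
    Ideal.subset_span ⟨T.sub_mem (hT σ hσS) T.one_mem, by simp [apply_contractLeft, hσπ, hχπ]⟩
  convert I.sub_mem hyσ (I.mul_mem_right y hσ1) using 1
  ring

/-- Under hypothesis (H) and the additional data `(χ, π, T)`, if `1 ⊗ y` lies in the
ideal `J` generated by `S⁺ = S ∩ ker ε`, then `y` lies in the ideal of `N` generated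
by `T ∩ ker ε_N`. -/
theorem mem_idealN_of_one_tmul_mem_ideal
    (R : Type) [CommRing R] (M N : Type) [CommRing M] [CommRing N]
    [Algebra R M] [Algebra R N]
    (εM : M →ₐ[R] R) (εN : N →ₐ[R] R)
    (S : Subalgebra R (M ⊗[R] N))
    (F : ℕ → Submodule R N)
    (hF0 : F 0 = ⊤)
    (hFdesc : ∀ s : ℕ, F (s + 1) ≤ F s)
    (hF1 : ∀ y : N, y ∈ F 1 ↔ εN y = 0)
    (hFmul : ∀ s : ℕ, ∀ x ∈ F s, ∀ y ∈ F 1, x * y ∈ F (s + 1))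
    (d : ℕ) (hFd : F (d + 1) = ⊥)
    (hH : ∀ a : M, ∃ (k : ℕ) (u : Fin k → M) (v : Fin k → N),
      (∀ i, v i ∈ F 1) ∧
        (a ⊗ₜ[R] (1 : N) + ∑ i, u i ⊗ₜ[R] v i) ∈ S)
    (χ : M →ₗ[R] R) (π : M)
    (hχπ : χ π = 1)
    (hπ : ∀ m : M, εM m = 0 → π * m = 0)
    (T : Subalgebra R N)
    (hT : ∀ x : M ⊗[R] N, x ∈ S →
      (TensorProduct.lid R N).toLinearMap.comp
        (TensorProduct.map χ (LinearMap.id : N →ₗ[R] N)) x ∈ T)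
    (y : N)
    (hy : (1 : M) ⊗ₜ[R] y ∈
      Ideal.span {x : M ⊗[R] N |
        x ∈ S ∧ Algebra.TensorProduct.productMap εM εN x = 0}) :
    y ∈ Ideal.span {z : N | z ∈ T ∧ εN z = 0} :=
  mem_idealN_of_one_tmul_mem_ideal_general R M N εM εN S F hF0 hF1 hFmul d hFd hH χ π hχπ hπ T hT y
    hy
end

section
/- Under hypothesis (H) and the additional data (χ, π, T), and assuming moreover that 1 ⊗ t ∈ S for every t ∈ T, the R-algebra homomorphism N → M ⊗_R N, n ↦ 1 ⊗ n, induces an isomorphism of R-algebras N/J_N ≅ (M ⊗_R N)/J. -/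
open scoped TensorProduct

/-!
Since the filtration forces `ker ε_N` to be nilpotent, hypothesis (H) and a descending induction
along the powers of `ker ε_N` give `M ⊗ N = S · (1 ⊗ N)`. As `S` maps into `R` modulo `J`, this
yields surjectivity, and it also shows `J = S⁺ · (1 ⊗ N)`. For injectivity, lift `π` to `p ∈ S`
along `id ⊗ ε_N`; the map `x ↦ (χ ⊗ id)(p x)` sends `S⁺ · (1 ⊗ N)` into `J_N`, because `π`
kills `ker ε_M`, and sends `1 ⊗ n` to `u n`, where `u = (χ ⊗ id)(p) ≡ 1` modulo the nilpotent
ideal `ker ε_N` is a unit.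
-/

theorem Ideal.isNilpotent_of_le_filtration {R N : Type*} [CommRing R] [CommRing N] [Algebra R N]
    {I : Ideal N} (F : ℕ → Submodule R N) (hI : ∀ y ∈ I, y ∈ F 1)
    (hFmul : ∀ s : ℕ, ∀ x ∈ F s, ∀ y ∈ F 1, x * y ∈ F (s + 1)) {d : ℕ} (hFd : F (d + 1) = ⊥) :
    IsNilpotent I := by
  have hpow : ∀ s : ℕ, ∀ x ∈ I ^ (s + 1), x ∈ F (s + 1) := by
    intro s
    induction s with
    | zero => simpa using hI
    | succ s ih =>
      intro x hx
      rw [pow_succ] at hx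
      exact Submodule.mul_induction_on hx (fun a ha b hb => hFmul _ a (ih a ha) b (hI b hb))
        fun _ _ => add_mem
  refine ⟨d + 1, eq_bot_iff.2 fun x hx => ?_⟩
  simpa [hFd] using hpow d x hx

theorem Ideal.isUnit_of_sub_one_mem_of_isNilpotent {N : Type*} [CommRing N] {I : Ideal N}
    (hI : IsNilpotent I) {x : N} (hx : x - 1 ∈ I) : IsUnit x := by
  obtain ⟨k, hk⟩ := hI
  have : IsNilpotent (x - 1) := ⟨k, by
    rw [← Ideal.mem_bot, ← Ideal.zero_eq_bot, ← hk]
    exact Ideal.pow_mem_pow hx k⟩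
  simpa using this.isUnit_add_one

section Augmentation

variable {R A : Type*} [CommRing R] [CommRing A] [Algebra R A]

/-- `S⁺ = S ∩ ker ε`. -/
def Subalgebra.augKer (S : Subalgebra R A) (ε : A →ₐ[R] R) : Submodule R A :=
  Subalgebra.toSubmodule S ⊓ LinearMap.ker ε.toLinearMap

variable {S : Subalgebra R A} {ε : A →ₐ[R] R}

@[simp]
theorem Subalgebra.mem_augKer {x : A} : x ∈ S.augKer ε ↔ x ∈ S ∧ ε x = 0 := Iff.rfl

theorem Subalgebra.toSubmodule_mul_augKer_le :
    Subalgebra.toSubmodule S * S.augKer ε ≤ S.augKer ε :=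
  Submodule.mul_le.2 fun s hs t ht => by
    rw [Subalgebra.mem_augKer] at ht ⊢
    exact ⟨S.mul_mem hs ht.1, by simp [ht.2]⟩

theorem Subalgebra.mk_span_augKer_eq_algebraMap {s : A} (hs : s ∈ S) :
    Ideal.Quotient.mk (Ideal.span (S.augKer ε : Set A)) s = algebraMap R _ (ε s) := by
  rw [← Ideal.Quotient.mk_algebraMap, Ideal.Quotient.eq]
  exact Ideal.subset_span ⟨sub_mem hs (S.algebraMap_mem _), by simp⟩

end Augmentation

theorem Ideal.span_le_mul_of_mul_eq_top {R A : Type*} [CommRing R] [CommRing A] [Algebra R A]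
    {S P B : Submodule R A} (hSB : S * B = ⊤) (hSP : S * P ≤ P) (hBB : B * B ≤ B) :
    (Ideal.span (P : Set A)).restrictScalars R ≤ P * B := by
  have hP : ⊤ * P ≤ P * B := calc
    ⊤ * P = S * P * B := by rw [← hSB, mul_right_comm]
    _ ≤ P * B := mul_le_mul' hSP le_rfl
  have hPB : ⊤ * (P * B) ≤ P * B := calc
    ⊤ * (P * B) ≤ P * B * B := by rw [← mul_assoc]; exact mul_le_mul' hP le_rfl
    _ ≤ P * B := by rw [mul_assoc]; exact mul_le_mul' le_rfl hBB
  intro x hx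
  induction hx using Submodule.span_induction with
  | mem x hx => simpa using hP (Submodule.mul_mem_mul (Submodule.mem_top (x := 1)) hx)
  | zero => exact zero_mem _
  | add x y _ _ hx hy => exact add_mem hx hy
  | smul a x _ hx => exact hPB (Submodule.mul_mem_mul Submodule.mem_top hx)

section TensorProduct

open Algebra.TensorProduct (includeRight productMap)

variable {R M N : Type*} [CommRing R] [CommRing M] [CommRing N] [Algebra R M] [Algebra R N]

/-- Hypothesis (H): every `a ⊗ 1` lies in `S` modulo `M ⊗ I`. -/
def Subalgebra.ContainsLeftModulo (S : Subalgebra R (M ⊗[R] N)) (I : Ideal N) : Prop :=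
  ∀ a : M, ∃ (k : ℕ) (u : Fin k → M) (v : Fin k → N),
    (∀ i, v i ∈ I) ∧ a ⊗ₜ[R] (1 : N) + ∑ i, u i ⊗ₜ[R] v i ∈ S

theorem toSubmodule_mul_range_includeRight_eq_top {I : Ideal N} (hI : IsNilpotent I)
    {S : Subalgebra R (M ⊗[R] N)} (hS : S.ContainsLeftModulo I) :
    Subalgebra.toSubmodule S * Subalgebra.toSubmodule (includeRight : N →ₐ[R] M ⊗[R] N).range
      = ⊤ := by
  obtain ⟨n, hn⟩ := hI
  set P := Subalgebra.toSubmodule S * Subalgebra.toSubmodule (includeRight : N →ₐ[R] M ⊗[R] N).range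
  -- descending induction on the power of `I` containing the right factor
  have key : ∀ m j : ℕ, n ≤ j + m → ∀ v ∈ I ^ j, ∀ a : M, a ⊗ₜ[R] v ∈ P := by
    intro m
    induction m with
    | zero =>
      intro j hj v hv a
      have hv0 : v = 0 := by
        rw [← Ideal.mem_bot, ← Ideal.zero_eq_bot, ← hn]
        exact Ideal.pow_le_pow_right hj hv
      simp [hv0]
    | succ m ih =>
      intro j hj v hv a
      obtain ⟨k, u, w, hw, hp⟩ := hS a
      have hsplit : a ⊗ₜ[R] v = (a ⊗ₜ[R] (1 : N) + ∑ i, u i ⊗ₜ[R] w i) * (1 ⊗ₜ[R] v)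
          - ∑ i, u i ⊗ₜ[R] (w i * v) := by
        simp [add_mul, Finset.sum_mul, Algebra.TensorProduct.tmul_mul_tmul]
      rw [hsplit]
      refine sub_mem (Submodule.mul_mem_mul hp ⟨v, rfl⟩) (Submodule.sum_mem _ fun i _ => ?_)
      refine ih (j + 1) (by omega) _ ?_ _
      rw [pow_succ']
      exact Ideal.mul_mem_mul (hw i) hv
  rw [eq_top_iff, ← TensorProduct.span_tmul_eq_top, Submodule.span_le]
  rintro _ ⟨a, v, rfl⟩
  exact key n 0 (by simp) v (by simp) a

theorem surjective_mk_comp_includeRight (ε : M ⊗[R] N →ₐ[R] R) {S : Subalgebra R (M ⊗[R] N)}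
    (hSB : Subalgebra.toSubmodule S *
      Subalgebra.toSubmodule (includeRight : N →ₐ[R] M ⊗[R] N).range = ⊤) :
    Function.Surjective
      ((Ideal.Quotient.mkₐ R (Ideal.span (S.augKer ε : Set (M ⊗[R] N)))).comp includeRight) := by
  rw [← AlgHom.range_eq_top, eq_top_iff]
  rintro y -
  obtain ⟨x, rfl⟩ := Ideal.Quotient.mk_surjective y
  have hx : x ∈ Subalgebra.toSubmodule S *
      Subalgebra.toSubmodule (includeRight : N →ₐ[R] M ⊗[R] N).range := hSB ▸ Submodule.mem_top
  refine Submodule.mul_induction_on hx (fun s hs _ ⟨w, hw⟩ => ?_) fun _ _ => by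
    simpa only [map_add] using add_mem
  rw [← hw, map_mul]
  refine mul_mem ?_ ⟨w, rfl⟩
  rw [Subalgebra.mk_span_augKer_eq_algebraMap hs]
  exact Subalgebra.algebraMap_mem _ _

theorem lid_rTensor_mul_one_tmul (χ : M →ₗ[R] R) (x : M ⊗[R] N) (w : N) :
    TensorProduct.lid R N (χ.rTensor N (x * (1 ⊗ₜ[R] w))) =
      TensorProduct.lid R N (χ.rTensor N x) * w := by
  induction x using TensorProduct.induction_on with
  | zero => simp
  | tmul m n => simp [Algebra.TensorProduct.tmul_mul_tmul]
  | add x y hx hy => simp only [add_mul, map_add, hx, hy]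

/-- `id ⊗ ε_N`, i.e. restriction to `X × {pt}`. -/
def evalRight (εN : N →ₐ[R] R) : M ⊗[R] N →ₐ[R] M :=
  productMap (AlgHom.id R M) ((Algebra.ofId R M).comp εN)

variable (εM : M →ₐ[R] R) (εN : N →ₐ[R] R)

@[simp]
theorem evalRight_tmul (m : M) (n : N) : evalRight εN (m ⊗ₜ[R] n) = εN n • m := by
  simp [evalRight, Algebra.ofId_apply, Algebra.smul_def, mul_comm]

theorem comp_evalRight : εM.comp (evalRight εN) = productMap εM εN := by
  ext <;> simp

theorem map_lid_rTensor_eq (χ : M →ₗ[R] R) (x : M ⊗[R] N) :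
    εN (TensorProduct.lid R N (χ.rTensor N x)) = χ (evalRight εN x) := by
  induction x using TensorProduct.induction_on with
  | zero => simp
  | tmul m n => simp [mul_comm]
  | add x y hx hy => simp only [map_add, hx, hy]

theorem exists_mem_evalRight_eq {S : Subalgebra R (M ⊗[R] N)}
    (hS : S.ContainsLeftModulo (RingHom.ker εN)) (a : M) : ∃ p ∈ S, evalRight εN p = a := by
  obtain ⟨k, u, v, hv, hp⟩ := hS a
  refine ⟨_, hp, ?_⟩
  simp_all [RingHom.mem_ker]

section Injectivity

variable {εM εN} {χ : M →ₗ[R] R} {π : M} {S : Subalgebra R (M ⊗[R] N)} {T : Subalgebra R N}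
  (hT : ∀ x ∈ S, TensorProduct.lid R N (χ.rTensor N x) ∈ T)
  (hπ : ∀ m : M, εM m = 0 → π * m = 0)
  {p : M ⊗[R] N} (hp : p ∈ S) (hpπ : evalRight εN p = π)
include hT hπ hp hpπ

theorem lid_rTensor_mul_mem_span_of_mem_augKer {s : M ⊗[R] N}
    (hs : s ∈ S.augKer (productMap εM εN)) :
    TensorProduct.lid R N (χ.rTensor N (p * s)) ∈ Ideal.span {z | z ∈ T ∧ εN z = 0} := by
  obtain ⟨hsS, hs0⟩ := Subalgebra.mem_augKer.1 hs
  refine Ideal.subset_span ⟨hT _ (S.mul_mem hp hsS), ?_⟩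
  rw [map_lid_rTensor_eq, map_mul, hpπ, hπ _ ?_, map_zero]
  rwa [← comp_evalRight εM εN, AlgHom.comp_apply] at hs0

theorem lid_rTensor_mul_mem_span_of_mem_span_augKer
    (hSB : Subalgebra.toSubmodule S *
      Subalgebra.toSubmodule (includeRight : N →ₐ[R] M ⊗[R] N).range = ⊤)
    {x : M ⊗[R] N} (hx : x ∈ Ideal.span (S.augKer (productMap εM εN) : Set (M ⊗[R] N))) :
    TensorProduct.lid R N (χ.rTensor N (p * x)) ∈ Ideal.span {z | z ∈ T ∧ εN z = 0} := by
  have hx' := Ideal.span_le_mul_of_mul_eq_top hSB Subalgebra.toSubmodule_mul_augKer_le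
    (Submodule.mul_le.2 fun _ ha _ hb => Subalgebra.mul_mem _ ha hb) hx
  refine Submodule.mul_induction_on hx' (fun s hs _ ⟨w, hw⟩ => ?_) fun _ _ h₁ h₂ => ?_
  · rw [← hw, ← mul_assoc]
    exact (lid_rTensor_mul_one_tmul χ (p * s) w).symm ▸
      Ideal.mul_mem_right _ _ (lid_rTensor_mul_mem_span_of_mem_augKer hT hπ hp hpπ hs)
  · rw [mul_add, map_add, map_add]
    exact add_mem h₁ h₂

theorem comap_includeRight_span_augKer_le (hN : IsNilpotent (RingHom.ker εN))
    (hSB : Subalgebra.toSubmodule S *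
      Subalgebra.toSubmodule (includeRight : N →ₐ[R] M ⊗[R] N).range = ⊤)
    (hχπ : χ π = 1) :
    (Ideal.span (S.augKer (productMap εM εN) : Set (M ⊗[R] N))).comap includeRight ≤
      Ideal.span {z | z ∈ T ∧ εN z = 0} := by
  intro n hn
  have hmem := lid_rTensor_mul_mem_span_of_mem_span_augKer hT hπ hp hpπ hSB hn
  rw [Algebra.TensorProduct.includeRight_apply, lid_rTensor_mul_one_tmul] at hmem
  refine (Ideal.unit_mul_mem_iff_mem _ (Ideal.isUnit_of_sub_one_mem_of_isNilpotent hN ?_)).1 hmem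
  rw [RingHom.mem_ker, map_sub, map_lid_rTensor_eq, hpπ, hχπ, map_one, sub_self]

end Injectivity

end TensorProduct

theorem quotient_algEquiv_of_split_general
    (R : Type) [CommRing R] (M N : Type) [CommRing M] [CommRing N]
    [Algebra R M] [Algebra R N]
    (εM : M →ₐ[R] R) (εN : N →ₐ[R] R)
    (S : Subalgebra R (M ⊗[R] N))
    (F : ℕ → Submodule R N)
    (hF1 : ∀ y : N, y ∈ F 1 ↔ εN y = 0)
    (hFmul : ∀ s : ℕ, ∀ x ∈ F s, ∀ y ∈ F 1, x * y ∈ F (s + 1))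
    (d : ℕ) (hFd : F (d + 1) = ⊥)
    (hH : ∀ a : M, ∃ (k : ℕ) (u : Fin k → M) (v : Fin k → N),
      (∀ i, v i ∈ F 1) ∧
        (a ⊗ₜ[R] (1 : N) + ∑ i, u i ⊗ₜ[R] v i) ∈ S)
    (χ : M →ₗ[R] R) (π : M)
    (hχπ : χ π = 1)
    (hπ : ∀ m : M, εM m = 0 → π * m = 0)
    (T : Subalgebra R N)
    (hT : ∀ x : M ⊗[R] N, x ∈ S →
      (TensorProduct.lid R N).toLinearMap.comp
        (TensorProduct.map χ (LinearMap.id : N →ₗ[R] N)) x ∈ T)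
    (hTS : ∀ t : N, t ∈ T → (1 : M) ⊗ₜ[R] t ∈ S) :
    ∃ e : (N ⧸ Ideal.span {z : N | z ∈ T ∧ εN z = 0}) ≃ₐ[R]
        ((M ⊗[R] N) ⧸ Ideal.span {x : M ⊗[R] N |
          x ∈ S ∧ Algebra.TensorProduct.productMap εM εN x = 0}),
      ∀ n : N,
        e (Ideal.Quotient.mk (Ideal.span {z : N | z ∈ T ∧ εN z = 0}) n) =
          Ideal.Quotient.mk
            (Ideal.span {x : M ⊗[R] N |
              x ∈ S ∧ Algebra.TensorProduct.productMap εM εN x = 0})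
            ((1 : M) ⊗ₜ[R] n) := by
  have hN : IsNilpotent (RingHom.ker εN) :=
    Ideal.isNilpotent_of_le_filtration F (fun y hy => (hF1 y).2 hy) hFmul hFd
  have hsplit : S.ContainsLeftModulo (RingHom.ker εN) := fun a => by
    obtain ⟨k, u, v, hv, h⟩ := hH a
    exact ⟨k, u, v, fun i => (hF1 _).1 (hv i), h⟩
  have hSB := toSubmodule_mul_range_includeRight_eq_top hN hsplit
  obtain ⟨p, hp, hpπ⟩ := exists_mem_evalRight_eq εN hsplit π
  have hJ : Ideal.span {z | z ∈ T ∧ εN z = 0} ≤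
      (Ideal.span (S.augKer (Algebra.TensorProduct.productMap εM εN) : Set (M ⊗[R] N))).comap
        Algebra.TensorProduct.includeRight :=
    Ideal.span_le.2 fun z ⟨hzT, hz0⟩ => Ideal.subset_span ⟨hTS z hzT, by simp [hz0]⟩
  let φ := Ideal.quotientMapₐ
    (Ideal.span (S.augKer (Algebra.TensorProduct.productMap εM εN) : Set (M ⊗[R] N)))
    (Algebra.TensorProduct.includeRight : N →ₐ[R] M ⊗[R] N) hJ
  have hinj : Function.Injective φ := Ideal.quotientMap_injective' (H := hJ)
    (comap_includeRight_span_augKer_le hT hπ hp hpπ hN hSB hχπ)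
  have hsurj : Function.Surjective φ := fun y =>
    let ⟨n, hn⟩ := surjective_mk_comp_includeRight _ hSB y
    ⟨Ideal.Quotient.mk _ n, hn⟩
  exact ⟨AlgEquiv.ofBijective φ ⟨hinj, hsurj⟩, fun n => rfl⟩

/-- Under hypothesis (H), the additional data `(χ, π, T)`, and assuming `1 ⊗ t ∈ S` for
every `t ∈ T`, the `R`-algebra map `N → M ⊗[R] N`, `n ↦ 1 ⊗ n`, induces an isomorphism
of `R`-algebras `N/J_N ≅ (M ⊗[R] N)/J`. -/
theorem quotient_algEquiv_of_split
    (R : Type) [CommRing R] (M N : Type) [CommRing M] [CommRing N]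
    [Algebra R M] [Algebra R N]
    (εM : M →ₐ[R] R) (εN : N →ₐ[R] R)
    (S : Subalgebra R (M ⊗[R] N))
    (F : ℕ → Submodule R N)
    (hF0 : F 0 = ⊤)
    (hFdesc : ∀ s : ℕ, F (s + 1) ≤ F s)
    (hF1 : ∀ y : N, y ∈ F 1 ↔ εN y = 0)
    (hFmul : ∀ s : ℕ, ∀ x ∈ F s, ∀ y ∈ F 1, x * y ∈ F (s + 1))
    (d : ℕ) (hFd : F (d + 1) = ⊥)
    (hH : ∀ a : M, ∃ (k : ℕ) (u : Fin k → M) (v : Fin k → N),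
      (∀ i, v i ∈ F 1) ∧
        (a ⊗ₜ[R] (1 : N) + ∑ i, u i ⊗ₜ[R] v i) ∈ S)
    (χ : M →ₗ[R] R) (π : M)
    (hχπ : χ π = 1)
    (hπ : ∀ m : M, εM m = 0 → π * m = 0)
    (T : Subalgebra R N)
    (hT : ∀ x : M ⊗[R] N, x ∈ S →
      (TensorProduct.lid R N).toLinearMap.comp
        (TensorProduct.map χ (LinearMap.id : N →ₗ[R] N)) x ∈ T)
    (hTS : ∀ t : N, t ∈ T → (1 : M) ⊗ₜ[R] t ∈ S) :
    ∃ e : (N ⧸ Ideal.span {z : N | z ∈ T ∧ εN z = 0}) ≃ₐ[R]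
        ((M ⊗[R] N) ⧸ Ideal.span {x : M ⊗[R] N |
          x ∈ S ∧ Algebra.TensorProduct.productMap εM εN x = 0}),
      ∀ n : N,
        e (Ideal.Quotient.mk (Ideal.span {z : N | z ∈ T ∧ εN z = 0}) n) =
          Ideal.Quotient.mk
            (Ideal.span {x : M ⊗[R] N |
              x ∈ S ∧ Algebra.TensorProduct.productMap εM εN x = 0})
            ((1 : M) ⊗ₜ[R] n) :=
  quotient_algEquiv_of_split_general R M N εM εN S F hF1 hFmul d hFd hH χ π hχπ hπ T hT hTS
end
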